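/- If A = A1 ∪ A2 is a separable γ-set of a finite simple graph G, with A1, A2 nonempty disjoint sets such that A1 dominates V(G) − A, then A2 is an independent set of G. -/

import Mathlib

open SimpleGraph

variable {V : Type*}

/-- `D` is a dominating set of `G`: every vertex is in `D` or adjacent to a vertex of `D`. -/
def IsDomSet (G : SimpleGraph V) (D : Set V) : Prop :=
  ∀ v : V, ∃ d ∈ D, d = v ∨ G.Adj d v

/-- The domination number of `G`: minimum cardinality of a dominating set. -/
noncomputable def domNum (G : SimpleGraph V) : ℕ :=
  sInf {n | ∃ D : Set V, IsDomSet G D ∧ D.ncard = n}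

/-- The prism `πG` of `G`: two disjoint copies of `G` together with the matching
`{u (π u) : u ∈ V(G)}`, the second copy playing the role of `G'`. -/
def prism (G : SimpleGraph V) (π : Equiv.Perm V) : SimpleGraph (V ⊕ V) where
  Adj a b :=
    match a, b with
    | Sum.inl u, Sum.inl v => G.Adj u v
    | Sum.inr u, Sum.inr v => G.Adj u v
    | Sum.inl u, Sum.inr v => π u = v
    | Sum.inr u, Sum.inl v => π v = u
  symm := ⟨by
    rintro (u | u) (v | v) h
    · exact G.adj_symm h
    · exact h
    · exact h
    · exact G.adj_symm h⟩
  loopless := ⟨by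
    rintro (u | u) h
    · exact G.irrefl h
    · exact G.irrefl h⟩

/-- The closed neighborhood `N[v]` of a vertex. -/
def closedNbhd (G : SimpleGraph V) (v : V) : Set V :=
  insert v (G.neighborSet v)

/-- `x` is a `C₃`-free vertex: non-isolated and belonging to no triangle of `G`. -/
def C3Free (G : SimpleGraph V) (x : V) : Prop :=
  (∃ y, G.Adj x y) ∧ ∀ u v : V, G.Adj x u → G.Adj x v → ¬ G.Adj u v

/-- `A = A1 ∪ A2` is a separable γ-set of `G` (an `A1`-γ-set): `A1, A2` are nonempty,
disjoint, `A` is a γ-set, and `A1` dominates `V(G) - A`. -/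
def SepGammaSet (G : SimpleGraph V) (A1 A2 : Set V) : Prop :=
  A1.Nonempty ∧ A2.Nonempty ∧ Disjoint A1 A2 ∧
  IsDomSet G (A1 ∪ A2) ∧ (A1 ∪ A2).ncard = domNum G ∧
  ∀ v ∉ A1 ∪ A2, ∃ u ∈ A1, G.Adj u v

/-- The separable γ-set `A = A1 ∪ A2` is effective under `π`: `π(A)` is a γ-set of the
copy `G'` of `G` (identified with `G`) whose dominating part is `B2' = π(A2)`,
i.e. `π(A2)` dominates `V(G') - π(A)`. -/
def Effective (G : SimpleGraph V) (π : Equiv.Perm V) (A1 A2 : Set V) : Prop :=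
  IsDomSet G (⇑π '' (A1 ∪ A2)) ∧ (⇑π '' (A1 ∪ A2)).ncard = domNum G ∧
  ∀ v ∉ ⇑π '' (A1 ∪ A2), ∃ u ∈ ⇑π '' A2, G.Adj u v

/-- The star `K_{1,m}` on `Fin (m+1)`, with center `0` adjacent to the `m` leaves. -/
def starGraph (m : ℕ) : SimpleGraph (Fin (m + 1)) where
  Adj a b := (a = 0 ∧ b ≠ 0) ∨ (b = 0 ∧ a ≠ 0)
  symm := ⟨fun a b h => Or.symm h⟩
  loopless := ⟨fun a h => by rcases h with ⟨h1, h2⟩ | ⟨h1, h2⟩ <;> exact h2 h1⟩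

/-! If two vertices `u, v` of `A2` were adjacent, `A - {u}` would still dominate `G`: `u` is
dominated by `v`, and every vertex outside `A` is dominated by `A1`, which does not contain `u`.
This contradicts the minimality of the γ-set `A`. -/

theorem IsDomSet.sdiff_singleton {G : SimpleGraph V} {D : Set V} {u : V}
    (hself : ∃ v ∈ D, v ≠ u ∧ G.Adj v u) (hout : ∀ w ∉ D, ∃ d ∈ D, d ≠ u ∧ G.Adj d w) :
    IsDomSet G (D \ {u}) := by
  intro w
  by_cases hwu : w = u
  · obtain ⟨v, hvD, hvu, hadj⟩ := hself
    exact ⟨v, ⟨hvD, hvu⟩, Or.inr (hwu ▸ hadj)⟩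
  by_cases hwD : w ∈ D
  · exact ⟨w, ⟨hwD, hwu⟩, Or.inl rfl⟩
  · obtain ⟨d, hdD, hdu, hadj⟩ := hout w hwD
    exact ⟨d, ⟨hdD, hdu⟩, Or.inr hadj⟩

theorem domNum_le_ncard {G : SimpleGraph V} {D : Set V} (hD : IsDomSet G D) :
    domNum G ≤ D.ncard :=
  Nat.sInf_le ⟨D, hD, rfl⟩

theorem not_isDomSet_sdiff_singleton_of_ncard_eq_domNum {G : SimpleGraph V} {D : Set V} {u : V}
    (hfin : D.Finite) (hcard : D.ncard = domNum G) (hu : u ∈ D) :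
    ¬ IsDomSet G (D \ {u}) := fun hdom =>
  (Set.ncard_sdiff_singleton_lt_of_mem hu hfin).not_ge (hcard ▸ domNum_le_ncard hdom)

/-- in a separable γ-set `A = A1 ∪ A2`, the set `A2` is independent. -/
theorem sep_gamma_set_A2_independent [Fintype V] (G : SimpleGraph V) (A1 A2 : Set V)
    (h : SepGammaSet G A1 A2) :
    ∀ u ∈ A2, ∀ v ∈ A2, u ≠ v → ¬ G.Adj u v := by
  intro u hu v hv huv hadj
  obtain ⟨-, -, hdisj, -, hcard, hsep⟩ := h
  refine not_isDomSet_sdiff_singleton_of_ncard_eq_domNum (Set.toFinite _) hcard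
    (Or.inr hu : u ∈ A1 ∪ A2) (IsDomSet.sdiff_singleton ?_ ?_)
  · exact ⟨v, Or.inr hv, huv.symm, G.adj_symm hadj⟩
  · intro w hw
    obtain ⟨a, ha, hadj'⟩ := hsep w hw
    exact ⟨a, Or.inl ha, hdisj.ne_of_mem ha hu, hadj'⟩
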